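/- The entropy of the stationary killed chain decomposes as h(𝕐^{(𝒦)}) = h(𝕐) + Δ(B), where h(𝕐) = -∑_{i,j∈I} μ(i) Q(i,j) log Q(i,j), h(𝕐^{(𝒦)}) = -∑_{(i,j,a)} ζ(i,j,a) ∑_{(k,b)} 𝒦((i,j,a),(j,k,b)) log 𝒦((i,j,a),(j,k,b)), and Δ(B) = -∑_{i,j∈I} μ(i) Q(i,j) (θ_{i,j} log θ_{i,j} + (1-θ_{i,j}) log(1-θ_{i,j})) with θ_{i,j} = P(i,j)/Q(i,j). -/

import Mathlib

open Finset Matrix Real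

/-!
From the state `(i, j, a)` the killed chain moves to `(j, k, true)` with probability `P(j, k)`
and to `(j, k, false)` with probability `κ(j) μ(k)`, where `κ(j)` is the killing probability;
so its transition entropy depends on `j` only and equals `∑ₖ η(P(j, k)) + η(κ(j) μ(k))`,
with `η(x) = -x log x`.
Summing over the first coordinate under `ζ` uses `μ Q = μ`: the mass `1 - γ` lost by the
quasi-stationary law is exactly what resurrection according to `μ` puts back.
The grouping rule `η(p) + η(q) = η(p + q) + (p + q) h(p / (p + q))` then separates the entropy of
`Q = P + κ μ` from the binary entropy `h` of `θ`.
-/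

theorem negMulLog_add_eq_negMulLog_add_mul_binEntropy {p q : ℝ} (hp : 0 ≤ p) (hq : 0 ≤ q) :
    negMulLog p + negMulLog q = negMulLog (p + q) + (p + q) * binEntropy (p / (p + q)) := by
  obtain hs | hs := (add_nonneg hp hq).eq_or_lt
  · obtain ⟨rfl, rfl⟩ : p = 0 ∧ q = 0 := ⟨by linarith, by linarith⟩
    simp
  set t := p / (p + q)
  have hpt : (p + q) * t = p := mul_div_cancel₀ p hs.ne'
  have hqt : (p + q) * (1 - t) = q := by rw [mul_one_sub, hpt]; ring
  have hnp : negMulLog p = t * negMulLog (p + q) + (p + q) * negMulLog t := by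
    rw [← negMulLog_mul, hpt]
  have hnq : negMulLog q = (1 - t) * negMulLog (p + q) + (p + q) * negMulLog (1 - t) := by
    rw [← negMulLog_mul, hqt]
  rw [hnp, hnq, binEntropy_eq_negMulLog_add_negMulLog_one_sub]
  ring

theorem vecMul_add_vecMulVec_eq_self {I R : Type*} [Fintype I] [CommRing R] {A : Matrix I I R}
    {κ μ : I → R} {γ : R} (hκ : κ = 1 - A *ᵥ 1) (hμ : ∑ i, μ i = 1) (hqsd : μ ᵥ* A = γ • μ) :
    μ ᵥ* (A + vecMulVec κ μ) = μ := by
  have hmass : μ ⬝ᵥ κ = 1 - γ := by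
    rw [hκ, dotProduct_sub, dotProduct_mulVec, hqsd, smul_dotProduct, dotProduct_one, hμ,
      smul_eq_mul, mul_one]
  rw [vecMul_add, vecMul_vecMulVec, hqsd, hmass, ← add_smul, add_sub_cancel, one_smul]

section SplitChain

variable {I : Type*} [Fintype I] (A B : Matrix I I ℝ) {μ : I → ℝ}

theorem sum_mul_sum_negMulLog_add_of_vecMul_eq_self
    (hA : ∀ i j, 0 ≤ A i j) (hB : ∀ i j, 0 ≤ B i j) (hμ : μ ᵥ* (A + B) = μ) :
    ∑ i, ∑ j, μ i * (A + B) i j * ∑ k, (negMulLog (A j k) + negMulLog (B j k))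
      = ∑ j, ∑ k, μ j * negMulLog ((A + B) j k)
        + ∑ j, ∑ k, μ j * (A + B) j k * binEntropy (A j k / (A + B) j k) := by
  calc ∑ i, ∑ j, μ i * (A + B) i j * ∑ k, (negMulLog (A j k) + negMulLog (B j k))
      = ∑ j, (μ ᵥ* (A + B)) j * ∑ k, (negMulLog (A j k) + negMulLog (B j k)) := by
        rw [sum_comm]
        simp only [vecMul, dotProduct, sum_mul]
    _ = ∑ j, ∑ k, μ j *
          (negMulLog ((A + B) j k) + (A + B) j k * binEntropy (A j k / (A + B) j k)) := by
        simp only [hμ, mul_sum, Matrix.add_apply,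
          negMulLog_add_eq_negMulLog_add_mul_binEntropy (hA _ _) (hB _ _)]
    _ = _ := by simp only [mul_add, sum_add_distrib, mul_assoc]

variable [DecidableEq I] {K : I × I × Bool → I × I × Bool → ℝ}

theorem sum_negMulLog_splitKernel
    (hK : ∀ (i j l k : I) (a b : Bool),
      K (i, j, a) (l, k, b) = if l = j then (if b then A j k else B j k) else 0)
    (i j : I) (a : Bool) :
    ∑ y, negMulLog (K (i, j, a) y) = ∑ k, (negMulLog (A j k) + negMulLog (B j k)) := by
  simp [Fintype.sum_prod_type, hK, apply_ite negMulLog, Finset.sum_ite_eq']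

theorem sum_mul_sum_negMulLog_splitKernel
    (hK : ∀ (i j l k : I) (a b : Bool),
      K (i, j, a) (l, k, b) = if l = j then (if b then A j k else B j k) else 0)
    {ζ : I × I × Bool → ℝ}
    (hζ : ∀ (i j : I) (a : Bool), ζ (i, j, a) = μ i * if a then A i j else B i j) :
    ∑ x, ζ x * ∑ y, negMulLog (K x y)
      = ∑ i, ∑ j, μ i * (A + B) i j * ∑ k, (negMulLog (A j k) + negMulLog (B j k)) := by
  simp only [Fintype.sum_prod_type, Fintype.sum_bool, sum_negMulLog_splitKernel A B hK, hζ,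
    if_true, Bool.false_eq_true, if_false, Matrix.add_apply]
  refine sum_congr rfl fun i _ => sum_congr rfl fun j _ => ?_
  ring

end SplitChain

theorem killed_entropy_decomposition {I E : Type*} [Fintype I] [Fintype E]
    [DecidableEq I]
    (P : Matrix (I ⊕ E) (I ⊕ E) ℝ)
    (hP0 : ∀ a b, 0 ≤ P a b)
    (hP1 : ∀ a, ∑ b, P a b = 1)
    (μ : I → ℝ) (hμ0 : ∀ i, 0 ≤ μ i) (hμ1 : ∑ i, μ i = 1)
    (γ : ℝ)
    (hqsd : μ ᵥ* (P.submatrix Sum.inl Sum.inl) = γ • μ)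
    (Q : Matrix I I ℝ)
    (hQ : ∀ i j, Q i j = P (Sum.inl i) (Sum.inl j)
        + (∑ ε : E, P (Sum.inl i) (Sum.inr ε)) * μ j)
    (θ : I → I → ℝ)
    (hθ : ∀ i j, θ i j = P (Sum.inl i) (Sum.inl j) / Q i j)
    (K : I × I × Bool → I × I × Bool → ℝ)
    (hK : ∀ (i j l k : I) (a b : Bool),
      K (i, j, a) (l, k, b)
        = if l = j then
            (if b then P (Sum.inl j) (Sum.inl k)
             else (∑ ε : E, P (Sum.inl j) (Sum.inr ε)) * μ k)
          else 0)
    (ζ : I × I × Bool → ℝ)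
    (hζ : ∀ (i j : I) (a : Bool),
      ζ (i, j, a)
        = if a then μ i * P (Sum.inl i) (Sum.inl j)
          else μ i * (∑ ε : E, P (Sum.inl i) (Sum.inr ε)) * μ j) :
    (∑ x : I × I × Bool, ζ x * ∑ y : I × I × Bool, negMulLog (K x y))
      = (∑ i : I, ∑ j : I, μ i * negMulLog (Q i j))
        + ∑ i : I, ∑ j : I,
            μ i * Q i j * (negMulLog (θ i j) + negMulLog (1 - θ i j)) := by
  set A := P.submatrix Sum.inl Sum.inl
  set κ : I → ℝ := fun i ↦ ∑ ε, P (Sum.inl i) (Sum.inr ε)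
  have hκ : κ = 1 - A *ᵥ 1 := funext fun i ↦ by
    have hrow := hP1 (Sum.inl i)
    rw [Fintype.sum_sum_type] at hrow
    simp only [κ, A, Pi.sub_apply, Pi.one_apply, mulVec, dotProduct, mul_one, submatrix_apply]
    linarith
  obtain rfl : Q = A + vecMulVec κ μ := by ext i j; simp [hQ, A, κ, vecMulVec_apply]
  obtain rfl : θ = fun i j ↦ A i j / (A + vecMulVec κ μ) i j := funext₂ hθ
  have hζ' : ∀ i j (a : Bool), ζ (i, j, a) = μ i * if a then A i j else vecMulVec κ μ i j := by
    intro i j a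
    cases a <;> simp [hζ, A, κ, vecMulVec_apply, mul_assoc]
  have hB : ∀ i j, 0 ≤ vecMulVec κ μ i j := fun i j ↦
    mul_nonneg (sum_nonneg fun ε _ ↦ hP0 _ _) (hμ0 j)
  rw [sum_mul_sum_negMulLog_splitKernel A (vecMulVec κ μ) hK hζ',
    sum_mul_sum_negMulLog_add_of_vecMul_eq_self A (vecMulVec κ μ) (fun i j ↦ hP0 _ _) hB
      (vecMul_add_vecMulVec_eq_self hκ hμ1 hqsd)]
  simp only [binEntropy_eq_negMulLog_add_negMulLog_one_sub]
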